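/- Let Q be a finite set of states, A a finite nonempty set of actions, G ⊆ Q a goal set, and H ∈ ℕ a horizon. Let P, P̂ : Q × A × Q → ℝ be substochastic transition functions (nonnegative with row sums at most 1), with Σ_{q′ ∈ Q} |P(q,a,q′) − P̂(q,a,q′)| ≤ δ for all q, a and some δ ≥ 0. Define V̂ by the recursion V̂_H(q) = 1_G(q), V̂_k(q) = 1_G(q) + 1_{Q∖G}(q)·max_{a} Σ_{q′} V̂_{k+1}(q′) P̂(q,a,q′); define V analogously with P; and define the greedy-policy value W by W_H(q) = 1_G(q), W_k(q) = 1_G(q) + 1_{Q∖G}(q)·Σ_{q′} W_{k+1}(q′) P(q, σ_k(q), q′), where σ_k : Q → A satisfies Σ_{q′} V̂_{k+1}(q′) P̂(q, σ_k(q), q′) = max_{a} Σ_{q′} V̂_{k+1}(q′) P̂(q,a,q′) for all q. Then for every k ∈ {0,…,H} and every q ∈ Q: |W_k(q) − V_k(q)| ≤ 2(H − k)·δ. -/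

import Mathlib

/-!
Both `W` and `V` are within `(H - k) δ` of `V̂`, because each backward step adds at most `δ`:
if `f` is within `c` of a `[0,1]`-valued `g`, then the expectations of `f` and `g` under two
substochastic rows at ℓ¹-distance `δ` differ by at most `c + δ`; a maximum over actions is
1-Lipschitz in the sup norm; and greediness of `σ` lets the `W`-step be compared with the
`V̂`-step at the same action. The triangle inequality through `V̂` gives `2 (H - k) δ`.
-/

/-- Finite-horizon dynamic-programming value function for maximal probability of
reaching the goal set `G` within a given number of remaining steps: `mdpVal P G j q`
is `V_k q` where `j = H - k` is the number of remaining steps. -/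
noncomputable def mdpVal {Q A : Type*} [Fintype Q] [Fintype A] [Nonempty A]
    (P : Q → A → Q → ℝ) (G : Set Q) : ℕ → Q → ℝ
  | 0 => fun q => Set.indicator G (fun _ => (1 : ℝ)) q
  | j + 1 => fun q =>
      Set.indicator G (fun _ => (1 : ℝ)) q +
        Set.indicator Gᶜ (fun _ => (1 : ℝ)) q *
          Finset.univ.sup' Finset.univ_nonempty
            (fun a => ∑ q', mdpVal P G j q' * P q a q')

/-- Value of the time-dependent policy `σ` under kernel `P` for horizon `H`:
`polVal P G σ H j q` is `W_k q` where `j = H - k` is the number of remaining steps,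
so the action used at `q` with `j + 1` steps remaining is `σ (H - (j+1)) q`. -/
noncomputable def polVal {Q A : Type*} [Fintype Q]
    (P : Q → A → Q → ℝ) (G : Set Q) (σ : ℕ → Q → A) (H : ℕ) : ℕ → Q → ℝ
  | 0 => fun q => Set.indicator G (fun _ => (1 : ℝ)) q
  | j + 1 => fun q =>
      Set.indicator G (fun _ => (1 : ℝ)) q +
        Set.indicator Gᶜ (fun _ => (1 : ℝ)) q *
          ∑ q', polVal P G σ H j q' * P q (σ (H - (j + 1)) q) q'

theorem Finset.abs_sup'_sub_sup'_le {ι α : Type*} [AddCommGroup α] [LinearOrder α]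
    [IsOrderedAddMonoid α] {s : Finset ι} (hs : s.Nonempty) {f g : ι → α} {c : α}
    (h : ∀ i ∈ s, |f i - g i| ≤ c) : |s.sup' hs f - s.sup' hs g| ≤ c := by
  have sup'_le_sup'_add : ∀ f g : ι → α, (∀ i ∈ s, f i - g i ≤ c) → s.sup' hs f ≤ s.sup' hs g + c :=
    fun f g h => s.sup'_le hs f fun i hi =>
      calc f i ≤ g i + c := sub_le_iff_le_add'.1 (h i hi)
        _ ≤ s.sup' hs g + c := by grw [s.le_sup' g hi]
  refine abs_sub_le_iff.2 ⟨?_, ?_⟩ <;> rw [sub_le_iff_le_add']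
  · exact sup'_le_sup'_add f g fun i hi => (abs_sub_le_iff.1 (h i hi)).1
  · exact sup'_le_sup'_add g f fun i hi => (abs_sub_le_iff.1 (h i hi)).2

theorem abs_sum_mul_sub_sum_mul_le {ι : Type*} [Fintype ι] {f g p p' : ι → ℝ} {c δ : ℝ}
    (hc : 0 ≤ c) (hp0 : ∀ i, 0 ≤ p i) (hp1 : ∑ i, p i ≤ 1) (hpp' : ∑ i, |p i - p' i| ≤ δ)
    (hg : ∀ i, |g i| ≤ 1) (hfg : ∀ i, |f i - g i| ≤ c) :
    |∑ i, f i * p i - ∑ i, g i * p' i| ≤ c + δ := by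
  have termwise : ∀ i, |(f i - g i) * p i + g i * (p i - p' i)| ≤ c * p i + |p i - p' i| :=
    fun i => calc
      _ ≤ |f i - g i| * p i + |g i| * |p i - p' i| := by
        simpa only [abs_mul, abs_of_nonneg (hp0 i)] using
          abs_add_le ((f i - g i) * p i) (g i * (p i - p' i))
      _ ≤ c * p i + 1 * |p i - p' i| := by
        gcongr
        exacts [hp0 i, hfg i, hg i]
      _ = c * p i + |p i - p' i| := by rw [one_mul]
  calc |∑ i, f i * p i - ∑ i, g i * p' i|
      = |∑ i, ((f i - g i) * p i + g i * (p i - p' i))| := by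
        rw [← Finset.sum_sub_distrib]; congr 1; exact Finset.sum_congr rfl fun i _ => by ring
    _ ≤ ∑ i, (c * p i + |p i - p' i|) := (Finset.abs_sum_le_sum_abs _ _).trans
        (Finset.sum_le_sum fun i _ => termwise i)
    _ = c * ∑ i, p i + ∑ i, |p i - p' i| := by rw [Finset.sum_add_distrib, Finset.mul_sum]
    _ ≤ c * 1 + δ := by gcongr
    _ = c + δ := by rw [mul_one]

theorem abs_indicator_add_indicator_compl_mul_sub_le {Q : Type*} (G : Set Q) (q : Q) (x y : ℝ) :
    |(G.indicator (fun _ => (1 : ℝ)) q + Gᶜ.indicator (fun _ => (1 : ℝ)) q * x) -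
        (G.indicator (fun _ => (1 : ℝ)) q + Gᶜ.indicator (fun _ => (1 : ℝ)) q * y)| ≤ |x - y| := by
  by_cases hq : q ∈ G <;> simp [hq]

theorem indicator_add_indicator_compl_mul_mem_Icc {Q : Type*} (G : Set Q) (q : Q) {x : ℝ}
    (hx : x ∈ Set.Icc 0 1) :
    G.indicator (fun _ => (1 : ℝ)) q + Gᶜ.indicator (fun _ => (1 : ℝ)) q * x ∈ Set.Icc 0 1 := by
  by_cases hq : q ∈ G <;> simp [hq, hx.1, hx.2]

theorem sum_mul_mem_Icc {ι : Type*} [Fintype ι] {v p : ι → ℝ} (hv : ∀ i, v i ∈ Set.Icc 0 1)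
    (hp0 : ∀ i, 0 ≤ p i) (hp1 : ∑ i, p i ≤ 1) : ∑ i, v i * p i ∈ Set.Icc 0 1 :=
  ⟨Finset.sum_nonneg fun i _ => mul_nonneg (hv i).1 (hp0 i),
    (Finset.sum_le_sum fun i _ => mul_le_of_le_one_left (hp0 i) (hv i).2).trans hp1⟩

section ValueIteration

variable {Q A : Type*} [Fintype Q] [Fintype A] [Nonempty A]

theorem mdpVal_mem_Icc {P : Q → A → Q → ℝ} (G : Set Q)
    (hP0 : ∀ q a q', 0 ≤ P q a q') (hP1 : ∀ q a, ∑ q', P q a q' ≤ 1) :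
    ∀ j q, mdpVal P G j q ∈ Set.Icc 0 1
  | 0, q => by by_cases hq : q ∈ G <;> simp [mdpVal, hq]
  | j + 1, q => by
    obtain ⟨a, -, ha⟩ := Finset.exists_mem_eq_sup' Finset.univ_nonempty
      (fun a => ∑ q', mdpVal P G j q' * P q a q')
    dsimp only [mdpVal]
    rw [ha]
    exact indicator_add_indicator_compl_mul_mem_Icc G q
      (sum_mul_mem_Icc (mdpVal_mem_Icc G hP0 hP1 j) (hP0 q a) (hP1 q a))

theorem abs_mdpVal_le_one {P : Q → A → Q → ℝ} (G : Set Q)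
    (hP0 : ∀ q a q', 0 ≤ P q a q') (hP1 : ∀ q a, ∑ q', P q a q' ≤ 1) (j : ℕ) (q : Q) :
    |mdpVal P G j q| ≤ 1 :=
  have h := mdpVal_mem_Icc G hP0 hP1 j q
  abs_le.2 ⟨by linarith [h.1], h.2⟩

theorem abs_mdpVal_sub_mdpVal_le {P P' : Q → A → Q → ℝ} (G : Set Q)
    (hP0 : ∀ q a q', 0 ≤ P q a q') (hP1 : ∀ q a, ∑ q', P q a q' ≤ 1)
    (hP'0 : ∀ q a q', 0 ≤ P' q a q') (hP'1 : ∀ q a, ∑ q', P' q a q' ≤ 1)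
    {δ : ℝ} (hδ : 0 ≤ δ) (hPP' : ∀ q a, ∑ q', |P q a q' - P' q a q'| ≤ δ) :
    ∀ j q, |mdpVal P G j q - mdpVal P' G j q| ≤ j * δ
  | 0, q => by simp [mdpVal]
  | j + 1, q => by
    refine (abs_indicator_add_indicator_compl_mul_sub_le G q _ _).trans ?_
    rw [Nat.cast_succ, add_one_mul]
    refine Finset.abs_sup'_sub_sup'_le _ fun a _ => abs_sum_mul_sub_sum_mul_le
      (by positivity) (hP0 q a) (hP1 q a) (hPP' q a) (abs_mdpVal_le_one G hP'0 hP'1 j)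
      (abs_mdpVal_sub_mdpVal_le G hP0 hP1 hP'0 hP'1 hδ hPP' j)

theorem abs_polVal_sub_mdpVal_le {P P' : Q → A → Q → ℝ} (G : Set Q) (H : ℕ)
    (hP0 : ∀ q a q', 0 ≤ P q a q') (hP1 : ∀ q a, ∑ q', P q a q' ≤ 1)
    (hP'0 : ∀ q a q', 0 ≤ P' q a q') (hP'1 : ∀ q a, ∑ q', P' q a q' ≤ 1)
    {δ : ℝ} (hδ : 0 ≤ δ) (hPP' : ∀ q a, ∑ q', |P q a q' - P' q a q'| ≤ δ) {σ : ℕ → Q → A}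
    (hgreedy : ∀ k < H, ∀ q,
        ∑ q', mdpVal P' G (H - (k + 1)) q' * P' q (σ k q) q' =
          Finset.univ.sup' Finset.univ_nonempty
            (fun a => ∑ q', mdpVal P' G (H - (k + 1)) q' * P' q a q')) :
    ∀ j ≤ H, ∀ q, |polVal P G σ H j q - mdpVal P' G j q| ≤ j * δ
  | 0, _, q => by simp [polVal, mdpVal]
  | j + 1, hj, q => by
    refine (abs_indicator_add_indicator_compl_mul_sub_le G q _ _).trans ?_
    have greedy_step := hgreedy (H - (j + 1)) (by omega) q
    rw [show H - (H - (j + 1) + 1) = j by omega] at greedy_step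
    rw [← greedy_step, Nat.cast_succ, add_one_mul]
    refine abs_sum_mul_sub_sum_mul_le (by positivity) (hP0 q _) (hP1 q _) (hPP' q _)
      (abs_mdpVal_le_one G hP'0 hP'1 j)
      (abs_polVal_sub_mdpVal_le G H hP0 hP1 hP'0 hP'1 hδ hPP' hgreedy j (by omega))

end ValueIteration

theorem stmt13 {Q A : Type*} [Fintype Q] [Fintype A] [Nonempty A]
    (P Phat : Q → A → Q → ℝ) (G : Set Q) (H : ℕ)
    (hP0 : ∀ q a q', 0 ≤ P q a q') (hP1 : ∀ q a, ∑ q', P q a q' ≤ 1)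
    (hPh0 : ∀ q a q', 0 ≤ Phat q a q') (hPh1 : ∀ q a, ∑ q', Phat q a q' ≤ 1)
    (δ : ℝ) (hδ : 0 ≤ δ)
    (hTV : ∀ q a, ∑ q', |P q a q' - Phat q a q'| ≤ δ)
    (σ : ℕ → Q → A)
    (hgreedy : ∀ k < H, ∀ q,
        ∑ q', mdpVal Phat G (H - (k + 1)) q' * Phat q (σ k q) q' =
          Finset.univ.sup' Finset.univ_nonempty
            (fun a => ∑ q', mdpVal Phat G (H - (k + 1)) q' * Phat q a q')) :
    ∀ k ≤ H, ∀ q,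
      |polVal P G σ H (H - k) q - mdpVal P G (H - k) q| ≤ 2 * ((H - k : ℕ) : ℝ) * δ := by
  intro k _ q
  have hW := abs_polVal_sub_mdpVal_le G H hP0 hP1 hPh0 hPh1 hδ hTV hgreedy (H - k)
    (Nat.sub_le H k) q
  have hV := abs_mdpVal_sub_mdpVal_le G hP0 hP1 hPh0 hPh1 hδ hTV (H - k) q
  rw [abs_sub_comm] at hV
  calc |polVal P G σ H (H - k) q - mdpVal P G (H - k) q|
      ≤ |polVal P G σ H (H - k) q - mdpVal Phat G (H - k) q| +
          |mdpVal Phat G (H - k) q - mdpVal P G (H - k) q| := abs_sub_le _ _ _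
    _ ≤ 2 * ((H - k : ℕ) : ℝ) * δ := by linarith
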